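/- Test-function characterization of causality: A plan γ ∈ Π(μ,ν) is causal if and only if for every t ∈ {1,…,N}, every h_t ∈ C_b(ℝ^t) and every g_t ∈ C_b(ℝ^N), one has ∫ h_t(y₁,…,y_t) [ g_t(x₁,…,x_N) − ∫ g_t(x₁,…,x_t, x̃_{t+1},…,x̃_N) μ^{x₁,…,x_t}(dx̃_{t+1},…,dx̃_N) ] dγ = 0. -/

import Mathlib

open MeasureTheory ProbabilityTheory Set Filter
open scoped ENNReal NNReal BoundedContinuousFunction

noncomputable section

namespace CausalTransport

/-- The path space of a real-valued process in `N` time steps. -/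
abbrev Path (N : ℕ) := Fin N → ℝ

/-- Truncation of a path to its first `t` coordinates. -/
def proj (N t : ℕ) (x : Path N) : Fin t → ℝ :=
  fun i => if h : (i : ℕ) < N then x ⟨i, h⟩ else 0

/-- The coordinate with (0-based) index `t`, with junk value `0` if `t ≥ N`. -/
def coord (N t : ℕ) (x : Path N) : ℝ := if h : t < N then x ⟨t, h⟩ else 0

/-- The coordinates of a path after time `t`. -/
def tailProj (N t : ℕ) (x : Path N) : Fin (N - t) → ℝ := fun i => coord N (t + i) x

/-- Extension of a history of length `t` by one further value. -/
def snocFun (t : ℕ) (xs : Fin t → ℝ) (r : ℝ) : Fin (t + 1) → ℝ :=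
  fun i => if h : (i : ℕ) < t then xs ⟨i, h⟩ else r

/-- Extension of a history of length `t` to a full path (by `0`). -/
def pad (N t : ℕ) (xs : Fin t → ℝ) : Path N :=
  fun i => if h : (i : ℕ) < t then xs ⟨i, h⟩ else 0

/-- Glue the first `t` coordinates of `x` with the later coordinates `z`. -/
def glue (N t : ℕ) (x : Path N) (z : Fin (N - t) → ℝ) : Path N :=
  fun i => if (i : ℕ) < t then x i else
    if h : (i : ℕ) - t < N - t then z ⟨(i : ℕ) - t, h⟩ else 0

/-- Truncation of a pair of paths to the first `t` coordinates of each. -/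
def pairProj (N t : ℕ) (p : Path N × Path N) : (Fin t → ℝ) × (Fin t → ℝ) :=
  (proj N t p.1, proj N t p.2)

/-- The σ-algebra on path space generated by the first `t` coordinates. -/
def filt (N t : ℕ) : MeasurableSpace (Path N) :=
  MeasurableSpace.comap (proj N t) inferInstance

/-- `γ` is a transport plan (coupling) between `μ` and `ν`. -/
def IsCoupling {α β : Type*} [MeasurableSpace α] [MeasurableSpace β]
    (μ : Measure α) (ν : Measure β) (γ : Measure (α × β)) : Prop :=
  γ.map Prod.fst = μ ∧ γ.map Prod.snd = ν

/-- `γ` is a causal transport plan between `μ` and `ν`: it is a coupling and, for any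
disintegration `K` of `γ` over its first coordinate and any `t ∈ {1,…,N}`, the map
`x ↦ K x B` is measurable for the σ-algebra of the first `t` coordinates (up to `μ`-null
sets) whenever `B` is measurable for the first `t` coordinates. -/
def IsCausal (N : ℕ) (μ ν : Measure (Path N)) (γ : Measure (Path N × Path N)) : Prop :=
  IsCoupling μ ν γ ∧
  ∀ K : Kernel (Path N) (Path N), IsSFiniteKernel K → μ ⊗ₘ K = γ →
    ∀ t : ℕ, 1 ≤ t → t ≤ N → ∀ B : Set (Path N), MeasurableSet[filt N t] B →
      ∃ g : Path N → ℝ≥0∞, Measurable[filt N t] g ∧ (fun x => K x B) =ᵐ[μ] g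

/-- `γ` is a bicausal transport plan between `μ` and `ν`. -/
def IsBicausal (N : ℕ) (μ ν : Measure (Path N)) (γ : Measure (Path N × Path N)) : Prop :=
  IsCausal N μ ν γ ∧ IsCausal N ν μ (γ.map Prod.swap)

/-- Regular conditional distribution, under `μ`, of the coordinate of index `t`
given the first `t` coordinates. -/
def nextK (N : ℕ) (μ : Measure (Path N)) [IsFiniteMeasure μ] (t : ℕ) :
    Kernel (Fin t → ℝ) ℝ :=
  (μ.map (fun x => (proj N t x, coord N t x))).condKernel

/-- Regular conditional distribution, under `μ`, of all the coordinates after time `t`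
given the first `t` coordinates. -/
def tailK (N : ℕ) (μ : Measure (Path N)) [IsFiniteMeasure μ] (t : ℕ) :
    Kernel (Fin t → ℝ) (Fin (N - t) → ℝ) :=
  (μ.map (fun x => (proj N t x, tailProj N t x))).condKernel

/-- Regular conditional distribution, under `γ`, of the pair of coordinates of index `t`
given the first `t` coordinates of both paths. -/
def stepK (N : ℕ) (γ : Measure (Path N × Path N)) [IsFiniteMeasure γ] (t : ℕ) :
    Kernel ((Fin t → ℝ) × (Fin t → ℝ)) (ℝ × ℝ) :=
  (γ.map (fun p => (pairProj N t p, (coord N t p.1, coord N t p.2)))).condKernel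

/-- Regular conditional distribution, under `μ`, of the coordinate of index `t` given the
single coordinate of index `t-1` (one-step Markov transition kernel). -/
def mstep (N : ℕ) (μ : Measure (Path N)) [IsFiniteMeasure μ] (t : ℕ) : Kernel ℝ ℝ :=
  (μ.map (fun x => (coord N (t - 1) x, coord N t x))).condKernel

/-- `μ` is a Markov measure. -/
def IsMarkovMeasure (N : ℕ) (μ : Measure (Path N)) [IsFiniteMeasure μ] : Prop :=
  ∀ (t : ℕ) (ht : 1 ≤ t) (_ : t < N),
    ∀ᵐ xs ∂(μ.map (proj N t)), nextK N μ t xs = mstep N μ t (xs ⟨t - 1, by omega⟩)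

/-- A causal plan is causal quasi-Markov if (every version of) the conditional law of
`(x_{t+1}, y_{t+1})` given `(x_1,…,x_t,y_1,…,y_t)` depends a.s. only on `(x_t, y_1,…,y_t)`. -/
def IsQuasiMarkov (N : ℕ) (γ : Measure (Path N × Path N)) : Prop :=
  ∀ (t : ℕ) (ht : 1 ≤ t) (_ : t < N),
    ∀ S : Kernel ((Fin t → ℝ) × (Fin t → ℝ)) (ℝ × ℝ), IsSFiniteKernel S →
      (γ.map (pairProj N t)) ⊗ₘ S
          = γ.map (fun p => (pairProj N t p, (coord N t p.1, coord N t p.2))) →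
      ∃ κ : Kernel (ℝ × (Fin t → ℝ)) (ℝ × ℝ),
        ∀ᵐ z ∂(γ.map (pairProj N t)), S z = κ (z.1 ⟨t - 1, by omega⟩, z.2)

/-- Topological support of a measure. -/
def msupport {α : Type*} [TopologicalSpace α] [MeasurableSpace α] (μ : Measure α) : Set α :=
  {x | ∀ U : Set α, IsOpen U → x ∈ U → μ U ≠ 0}

/-- `K` is a version of the disintegration of `μ` at time `t` which is weakly continuous on
the support of the first `t` coordinates of `μ`. -/
def WeaklyContinuousDisintegration (N t : ℕ) (μ : Measure (Path N))
    (K : Kernel (Fin t → ℝ) (Fin (N - t) → ℝ)) : Prop :=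
  IsMarkovKernel K ∧
  (μ.map (proj N t)) ⊗ₘ K = μ.map (fun x => (proj N t x, tailProj N t x)) ∧
  ∀ f : (Fin (N - t) → ℝ) →ᵇ ℝ,
    ContinuousOn (fun xs => ∫ z, f z ∂(K xs)) (msupport (μ.map (proj N t)))

/-- `μ` is successively weakly continuous. -/
def SuccWeakCont (N : ℕ) (μ : Measure (Path N)) : Prop :=
  ∀ t : ℕ, t < N → ∃ K : Kernel (Fin t → ℝ) (Fin (N - t) → ℝ),
    WeaklyContinuousDisintegration N t μ K

/-- The cumulative distribution function of a measure on `ℝ`. -/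
def cdf1 (η : Measure ℝ) (z : ℝ) : ℝ := (η (Iic z)).toReal

/-- The left-continuous generalized inverse (quantile function) of the c.d.f. of `η`. -/
def qinv (η : Measure ℝ) (u : ℝ) : ℝ := sInf {y : ℝ | u ≤ cdf1 η y}

/-- Partial Knothe–Rosenblatt path built from the "uniform" inputs `u`. -/
def krPartial (N : ℕ) (μ : Measure (Path N)) [IsFiniteMeasure μ] (u : ℕ → ℝ) :
    (t : ℕ) → Fin t → ℝ
  | 0 => Fin.elim0
  | t + 1 => snocFun t (krPartial N μ u t)
      (qinv (nextK N μ t (krPartial N μ u t)) (u t))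

/-- The Knothe–Rosenblatt (quantile transform) path built from uniform inputs. -/
def krPath (N : ℕ) (μ : Measure (Path N)) [IsFiniteMeasure μ] (u : Path N) : Path N :=
  krPartial N μ (fun n => if h : n < N then u ⟨n, h⟩ else 0) N

/-- The uniform distribution on `[0,1]`. -/
def unif01 : Measure ℝ := volume.restrict (Icc (0 : ℝ) 1)

instance : IsProbabilityMeasure unif01 := by
  constructor
  simp [unif01, Real.volume_Icc]

/-- N independent uniforms on `[0,1]`. -/
def uniformCube (N : ℕ) : Measure (Path N) := Measure.pi fun _ => unif01

instance (N : ℕ) : IsProbabilityMeasure (uniformCube N) :=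
  inferInstanceAs (IsProbabilityMeasure (Measure.pi fun _ : Fin N => unif01))

/-- The (increasing) Knothe–Rosenblatt rearrangement of `(μ, ν)`: the joint law of
`(X*, Y*)` where both paths are built from the same independent uniforms. -/
def krCoupling (N : ℕ) (μ ν : Measure (Path N)) [IsFiniteMeasure μ] [IsFiniteMeasure ν] :
    Measure (Path N × Path N) :=
  (uniformCube N).map (fun u => (krPath N μ u, krPath N ν u))

/-- Partial Knothe–Rosenblatt Monge map. -/
def krMapPartial (N : ℕ) (μ ν : Measure (Path N)) [IsFiniteMeasure μ] [IsFiniteMeasure ν]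
    (x : Path N) : (t : ℕ) → Fin t → ℝ
  | 0 => Fin.elim0
  | t + 1 => snocFun t (krMapPartial N μ ν x t)
      (qinv (nextK N ν t (krMapPartial N μ ν x t))
        (cdf1 (nextK N μ t (proj N t x)) (coord N t x)))

/-- The Knothe–Rosenblatt Monge map from `μ` to `ν`. -/
def krMap (N : ℕ) (μ ν : Measure (Path N)) [IsFiniteMeasure μ] [IsFiniteMeasure ν]
    (x : Path N) : Path N :=
  krMapPartial N μ ν x N

open Classical in
/-- Relative entropy `Ent(ν|μ)`, via the nonnegative integrand `f log f - f + 1`,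
`f = dν/dμ`; equals `∫ log (dν/dμ) dν` for probability measures. -/
def relEnt {α : Type*} [MeasurableSpace α] (ν μ : Measure α) : ℝ≥0∞ :=
  if ν ≪ μ then
    ∫⁻ x, ENNReal.ofReal
      ((ν.rnDeriv μ x).toReal * Real.log (ν.rnDeriv μ x).toReal
        - (ν.rnDeriv μ x).toReal + 1) ∂μ
  else ∞

/-- Universally measurable `ℝ≥0∞`-valued function. -/
def UnivMeasurable {α : Type*} [MeasurableSpace α] (f : α → ℝ≥0∞) : Prop :=
  ∀ P : Measure α, IsFiniteMeasure P → AEMeasurable f P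

end CausalTransport

/-!
Write `𝓕ₜ` for `filt N t`. The inner integral against `tailK` is a version of `μ[g | 𝓕ₜ]`, so
the test integral is `∫ h(y≤t) (g - μ[g | 𝓕ₜ])(x) dγ`. Disintegrate `γ = μ ⊗ K`. Since bounded
continuous functions determine finite measures, letting `h` range over `C_b(ℝᵗ)` is the same as
letting it range over indicators of Borel sets `A`, which turns the integral into
`∫ K(x, B) (g - μ[g | 𝓕ₜ])(x) dμ` with `B = {y | y≤t ∈ A}`. By self-adjointness of the conditional
expectation this is `∫ g (w - μ[w | 𝓕ₜ]) dμ` for `w = K(·, B)`, and it vanishes for all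
`g ∈ C_b` exactly when `w = μ[w | 𝓕ₜ]` a.e., i.e. when `K(·, B)` has an `𝓕ₜ`-measurable version.
-/

namespace MeasureTheory

section MapWithDensity

variable {α Ω : Type*} [MeasurableSpace α] [MeasurableSpace Ω]

-- `mapWithDensity γ π D - mapWithDensity γ π (-D)` is the image under `π` of the signed measure
-- `D • γ`.
def mapWithDensity (γ : Measure α) (π : α → Ω) (D : α → ℝ) : Measure Ω :=
  (γ.withDensity fun a => ENNReal.ofReal (D a)).map π

variable {γ : Measure α} {π : α → Ω} {D : α → ℝ}

lemma isFiniteMeasure_mapWithDensity (hD : Integrable D γ) :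
    IsFiniteMeasure (mapWithDensity γ π D) :=
  haveI := isFiniteMeasure_withDensity_ofReal hD.2
  Measure.isFiniteMeasure_map _ _

lemma integral_mapWithDensity (hπ : Measurable π) (hD : AEStronglyMeasurable D γ) {h : Ω → ℝ}
    (hh : Measurable h) :
    ∫ ω, h ω ∂(mapWithDensity γ π D) = ∫ a, max (D a) 0 * h (π a) ∂γ := by
  rw [mapWithDensity, integral_map hπ.aemeasurable hh.aestronglyMeasurable,
    integral_withDensity_eq_integral_toReal_smul₀ hD.aemeasurable.ennreal_ofReal
      (ae_of_all _ fun _ => ENNReal.ofReal_lt_top)]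
  simp_rw [ENNReal.toReal_ofReal', smul_eq_mul]

lemma integral_comp_mul_eq_integral_mapWithDensity_sub (hπ : Measurable π) (hD : Integrable D γ)
    {h : Ω → ℝ} (hh : Measurable h) {C : ℝ} (hC : ∀ ω, |h ω| ≤ C) :
    ∫ a, h (π a) * D a ∂γ =
      ∫ ω, h ω ∂(mapWithDensity γ π D) - ∫ ω, h ω ∂(mapWithDensity γ π (-D)) := by
  have hbdd : ∀ᵐ a ∂γ, ‖h (π a)‖ ≤ C := ae_of_all _ fun a => hC (π a)
  have hmeas : AEStronglyMeasurable (fun a => h (π a)) γ :=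
    (hh.comp hπ).aestronglyMeasurable
  rw [integral_mapWithDensity hπ hD.1 hh, integral_mapWithDensity hπ hD.1.neg hh, ← integral_sub
    (hD.pos_part.mul_bdd hmeas hbdd) (hD.neg.pos_part.mul_bdd hmeas hbdd)]
  congr 1 with a
  rw [Pi.neg_apply, ← sub_mul, max_zero_sub_max_neg_zero_eq_self, mul_comm]

lemma setIntegral_preimage_eq_measureReal_mapWithDensity_sub (hπ : Measurable π)
    (hD : Integrable D γ) {A : Set Ω} (hA : MeasurableSet A) :
    ∫ a in π ⁻¹' A, D a ∂γ = (mapWithDensity γ π D).real A - (mapWithDensity γ π (-D)).real A := by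
  have hind : ∀ ρ : Measure Ω, ∫ ω, A.indicator 1 ω ∂ρ = ρ.real A := fun ρ =>
    integral_indicator_one hA
  rw [← hind, ← hind, ← integral_comp_mul_eq_integral_mapWithDensity_sub hπ hD
    (measurable_one.indicator hA) (C := 1) fun ω => by
      by_cases h : ω ∈ A <;> simp [h], ← integral_indicator (hπ hA)]
  congr 1 with a
  by_cases h : π a ∈ A <;> simp [h]

variable [TopologicalSpace Ω] [HasOuterApproxClosed Ω] [BorelSpace Ω]

lemma forall_integral_boundedContinuous_comp_mul_eq_zero_iff (hπ : Measurable π)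
    (hD : Integrable D γ) :
    (∀ h : Ω →ᵇ ℝ, ∫ a, h (π a) * D a ∂γ = 0) ↔
      ∀ A, MeasurableSet A → ∫ a in π ⁻¹' A, D a ∂γ = 0 := by
  have := isFiniteMeasure_mapWithDensity (π := π) hD
  have := isFiniteMeasure_mapWithDensity (π := π) hD.neg
  have hC : ∀ h : Ω →ᵇ ℝ, ∫ a, h (π a) * D a ∂γ = ∫ ω, h ω ∂(mapWithDensity γ π D)
      - ∫ ω, h ω ∂(mapWithDensity γ π (-D)) := fun h =>
    integral_comp_mul_eq_integral_mapWithDensity_sub hπ hD h.continuous.measurable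
      fun ω => (Real.norm_eq_abs _).symm.trans_le (h.norm_coe_le_norm ω)
  calc (∀ h : Ω →ᵇ ℝ, ∫ a, h (π a) * D a ∂γ = 0)
      ↔ mapWithDensity γ π D = mapWithDensity γ π (-D) := by
        simp_rw [hC, sub_eq_zero]
        exact ⟨ext_of_forall_integral_eq_of_IsFiniteMeasure, fun h _ => h ▸ rfl⟩
    _ ↔ ∀ A, MeasurableSet A → ∫ a in π ⁻¹' A, D a ∂γ = 0 := by
        refine Measure.ext_iff.trans (forall₂_congr fun A hA => ?_)
        rw [setIntegral_preimage_eq_measureReal_mapWithDensity_sub hπ hD hA, sub_eq_zero,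
          measureReal_eq_measureReal_iff]

lemma ae_eq_zero_of_forall_integral_boundedContinuous_mul_eq_zero {μ : Measure Ω} {f : Ω → ℝ}
    (hf : Integrable f μ) (h : ∀ g : Ω →ᵇ ℝ, ∫ x, g x * f x ∂μ = 0) : f =ᵐ[μ] 0 :=
  hf.ae_eq_zero_of_forall_setIntegral_eq_zero fun A hA _ =>
    (forall_integral_boundedContinuous_comp_mul_eq_zero_iff measurable_id hf).mp h A hA

end MapWithDensity

section CondExp

variable {Ω : Type*} {m m₀ : MeasurableSpace Ω} {μ : Measure Ω} [IsFiniteMeasure μ]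

lemma integral_mul_condExp_eq_integral_condExp_mul (hm : m ≤ m₀) {w g : Ω → ℝ}
    (hw : Integrable w μ) (hg : AEStronglyMeasurable g μ) {C : ℝ} (hC : ∀ᵐ x ∂μ, |g x| ≤ C) :
    ∫ x, w x * μ[g|m] x ∂μ = ∫ x, μ[w|m] x * g x ∂μ := by
  have hgi : Integrable g μ := .of_bound hg C hC
  have hEg : ∀ᵐ x ∂μ, ‖μ[g|m] x‖ ≤ C := ae_bdd_abs_condExp_of_ae_bdd_abs hC
  calc ∫ x, w x * μ[g|m] x ∂μ = ∫ x, μ[w * μ[g|m]|m] x ∂μ := (integral_condExp hm).symm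
    _ = ∫ x, μ[w|m] x * μ[g|m] x ∂μ := integral_congr_ae <|
        condExp_mul_of_stronglyMeasurable_right stronglyMeasurable_condExp
          (hw.mul_bdd integrable_condExp.1 hEg) hw
    _ = ∫ x, μ[μ[w|m] * g|m] x ∂μ := integral_congr_ae <|
        (condExp_mul_of_stronglyMeasurable_left stronglyMeasurable_condExp
          (integrable_condExp.mul_bdd hg hC) hgi).symm
    _ = ∫ x, μ[w|m] x * g x ∂μ := integral_condExp hm

variable [TopologicalSpace Ω] [HasOuterApproxClosed Ω] [BorelSpace Ω]

lemma aestronglyMeasurable_iff_forall_integral_mul_sub_condExp_eq_zero (hm : m ≤ m₀)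
    {w : Ω → ℝ} (hw : Integrable w μ) :
    AEStronglyMeasurable[m] w μ ↔ ∀ g : Ω →ᵇ ℝ, ∫ x, w x * (g x - μ[g|m] x) ∂μ = 0 := by
  have hadjoint : ∀ g : Ω →ᵇ ℝ,
      ∫ x, w x * (g x - μ[g|m] x) ∂μ = ∫ x, g x * (w x - μ[w|m] x) ∂μ := fun g => by
    have hgm := g.continuous.measurable.aestronglyMeasurable (μ := μ)
    have hC : ∀ᵐ x ∂μ, |g x| ≤ ‖g‖ := ae_of_all _ fun x =>
      (Real.norm_eq_abs _).symm.trans_le (g.norm_coe_le_norm x)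
    simp_rw [mul_sub]
    rw [integral_sub (hw.mul_bdd hgm hC) (hw.mul_bdd integrable_condExp.1
        (ae_bdd_abs_condExp_of_ae_bdd_abs hC)),
      integral_sub (hw.bdd_mul hgm hC) (integrable_condExp.bdd_mul hgm hC),
      integral_mul_condExp_eq_integral_condExp_mul hm hw hgm hC]
    simp_rw [mul_comm (g _)]
  simp_rw [hadjoint]
  constructor
  · intro hwm g
    refine integral_eq_zero_of_ae ?_
    filter_upwards [condExp_of_aestronglyMeasurable' hm hwm hw] with x hx
    simp [hx]
  · intro h
    have hzero := ae_eq_zero_of_forall_integral_boundedContinuous_mul_eq_zero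
      (hw.sub integrable_condExp) h
    refine ⟨μ[w|m], stronglyMeasurable_condExp, ?_⟩
    filter_upwards [hzero] with x hx
    exact sub_eq_zero.mp hx

end CondExp

lemma exists_measurable_ae_eq_iff_aestronglyMeasurable_toReal {α : Type*}
    {m m₀ : MeasurableSpace α} {μ : Measure α} {f : α → ℝ≥0∞} (hf : ∀ᵐ x ∂μ, f x ≠ ∞) :
    (∃ g : α → ℝ≥0∞, Measurable[m] g ∧ f =ᵐ[μ] g) ↔
      AEStronglyMeasurable[m] (fun x => (f x).toReal) μ := by
  constructor
  · rintro ⟨g, hg, hfg⟩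
    exact ⟨fun x => (g x).toReal, hg.ennreal_toReal.stronglyMeasurable,
      hfg.mono fun x hx => congrArg ENNReal.toReal hx⟩
  · rintro ⟨g, hg, hfg⟩
    refine ⟨fun x => ENNReal.ofReal (g x), hg.measurable.ennreal_ofReal, ?_⟩
    filter_upwards [hf, hfg] with x hx hxg
    rw [← hxg, ENNReal.ofReal_toReal hx]

lemma Measure.setIntegral_compProd_preimage_snd {α β : Type*} [MeasurableSpace α]
    [MeasurableSpace β] {μ : Measure α} [SFinite μ] {κ : Kernel α β} [IsSFiniteKernel κ]
    {f : α → ℝ} (hf : Integrable (fun p : α × β => f p.1) (μ ⊗ₘ κ)) {B : Set β}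
    (hB : MeasurableSet B) :
    ∫ p in Prod.snd ⁻¹' B, f p.1 ∂(μ ⊗ₘ κ) = ∫ x, (κ x).real B * f x ∂μ := by
  rw [← univ_prod, Measure.setIntegral_compProd MeasurableSet.univ hB hf.integrableOn,
    Measure.restrict_univ]
  simp_rw [setIntegral_const, smul_eq_mul]

end MeasureTheory

namespace CausalTransport

lemma measurable_proj (N t : ℕ) : Measurable (proj N t) :=
  measurable_pi_iff.mpr fun i => by
    unfold proj; split
    · exact measurable_pi_apply _
    · exact measurable_const

lemma measurable_tailProj (N t : ℕ) : Measurable (tailProj N t) :=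
  measurable_pi_iff.mpr fun i => by
    unfold tailProj coord; split
    · exact measurable_pi_apply _
    · exact measurable_const

lemma measurable_pad (N t : ℕ) : Measurable (pad N t) :=
  measurable_pi_iff.mpr fun i => by
    unfold pad; split
    · exact measurable_pi_apply _
    · exact measurable_const

lemma measurable_glue (N t : ℕ) :
    Measurable fun q : Path N × (Fin (N - t) → ℝ) => glue N t q.1 q.2 :=
  measurable_pi_iff.mpr fun i => by
    unfold glue; split
    · exact (measurable_pi_apply _).comp measurable_fst
    · split
      · exact (measurable_pi_apply _).comp measurable_snd
      · exact measurable_const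

lemma filt_le (N t : ℕ) : filt N t ≤ (inferInstance : MeasurableSpace (Path N)) :=
  (measurable_proj N t).comap_le

lemma glue_pad_proj (N t : ℕ) (x : Path N) (z : Fin (N - t) → ℝ) :
    glue N t (pad N t (proj N t x)) z = glue N t x z := by
  funext i
  by_cases h : (i : ℕ) < t <;> simp [glue, pad, proj, h]

lemma glue_tailProj (N t : ℕ) (x : Path N) : glue N t x (tailProj N t x) = x := by
  funext i
  by_cases h : (i : ℕ) < t
  · simp [glue, h]
  · have h' : t + ((i : ℕ) - t) < N := by omega
    simp only [glue, h, if_false, tailProj, coord, dif_pos (by omega : (i : ℕ) - t < N - t),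
      dif_pos h']
    congr 1
    ext
    simp only
    omega

lemma tailK_eq_condDistrib (N t : ℕ) (μ : Measure (Path N)) [IsFiniteMeasure μ] :
    tailK N μ t = condDistrib (tailProj N t) (proj N t) μ := by
  rw [condDistrib]; rfl

lemma condExp_filt_ae_eq_integral_tailK (N t : ℕ) (μ : Measure (Path N))
    [IsProbabilityMeasure μ] {g : Path N → ℝ} (hg : StronglyMeasurable g)
    (hgi : Integrable g μ) :
    μ[g | filt N t] =ᵐ[μ] fun x => ∫ z, g (glue N t x z) ∂(tailK N μ t (proj N t x)) := by
  have hf : StronglyMeasurable fun q : (Fin t → ℝ) × (Fin (N - t) → ℝ) =>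
      g (glue N t (pad N t q.1) q.2) :=
    hg.comp_measurable ((measurable_glue N t).comp
      (((measurable_pad N t).comp measurable_fst).prodMk measurable_snd))
  have := condExp_prod_ae_eq_integral_condDistrib (measurable_proj N t)
    (measurable_tailProj N t).aemeasurable hf (by simpa only [glue_pad_proj, glue_tailProj])
  simp only [glue_pad_proj, glue_tailProj] at this
  rw [tailK_eq_condDistrib]
  exact this

lemma forall_exists_filt_measurable_ae_eq_iff {N : ℕ} (t : ℕ) {μ : Measure (Path N)}
    [IsProbabilityMeasure μ] {K : Kernel (Path N) (Path N)} [IsSFiniteKernel K]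
    (hK : (μ ⊗ₘ K).map Prod.fst = μ) :
    (∀ B, MeasurableSet[filt N t] B →
        ∃ g : Path N → ℝ≥0∞, Measurable[filt N t] g ∧ (fun x => K x B) =ᵐ[μ] g) ↔
      ∀ (h : (Fin t → ℝ) →ᵇ ℝ) (g : Path N →ᵇ ℝ),
        ∫ p, h (proj N t p.2) * (g p.1 - μ[g | filt N t] p.1) ∂(μ ⊗ₘ K) = 0 := by
  have : IsFiniteMeasure ((μ ⊗ₘ K).map Prod.fst) := by
    rw [hK]; infer_instance
  have : IsFiniteMeasure (μ ⊗ₘ K) := Measure.isFiniteMeasure_of_map measurable_fst.aemeasurable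
  have hKB : ∀ B, MeasurableSet B → ∫⁻ x, K x B ∂μ ≠ ∞ := fun B hB => by
    rw [← setLIntegral_univ, ← Measure.compProd_apply_prod .univ hB]
    exact measure_ne_top _ _
  have hD : ∀ g : Path N →ᵇ ℝ,
      Integrable (fun p : Path N × Path N => g p.1 - μ[g | filt N t] p.1) (μ ⊗ₘ K) := by
    intro g
    have : Integrable (fun x => g x - μ[g | filt N t] x) ((μ ⊗ₘ K).map Prod.fst) := by
      rw [hK]; exact (g.integrable μ).sub integrable_condExp
    exact this.comp_measurable measurable_fst
  calc (∀ B, MeasurableSet[filt N t] B →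
        ∃ g : Path N → ℝ≥0∞, Measurable[filt N t] g ∧ (fun x => K x B) =ᵐ[μ] g)
      ↔ ∀ A, MeasurableSet A → ∃ g : Path N → ℝ≥0∞,
          Measurable[filt N t] g ∧ (fun x => K x (proj N t ⁻¹' A)) =ᵐ[μ] g :=
        ⟨fun h A hA => h _ ⟨A, hA, rfl⟩, fun h _ ⟨A, hA, hAB⟩ => hAB ▸ h A hA⟩
    _ ↔ ∀ A, MeasurableSet A → ∀ g : Path N →ᵇ ℝ,
          ∫ x, (K x).real (proj N t ⁻¹' A) * (g x - μ[g | filt N t] x) ∂μ = 0 := by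
        refine forall₂_congr fun A hA => ?_
        have hB := measurable_proj N t hA
        rw [exists_measurable_ae_eq_iff_aestronglyMeasurable_toReal
            ((ae_lt_top (K.measurable_coe hB) (hKB _ hB)).mono fun _ hx => hx.ne),
          aestronglyMeasurable_iff_forall_integral_mul_sub_condExp_eq_zero (filt_le N t)
            (integrable_toReal_of_lintegral_ne_top (K.measurable_coe hB).aemeasurable
              (hKB _ hB))]
        rfl
    _ ↔ ∀ g : Path N →ᵇ ℝ, ∀ A, MeasurableSet A →
          ∫ x, (K x).real (proj N t ⁻¹' A) * (g x - μ[g | filt N t] x) ∂μ = 0 :=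
        ⟨fun h g A hA => h A hA g, fun h A hA g => h g A hA⟩
    _ ↔ ∀ (g : Path N →ᵇ ℝ) (h : (Fin t → ℝ) →ᵇ ℝ),
          ∫ p, h (proj N t p.2) * (g p.1 - μ[g | filt N t] p.1) ∂(μ ⊗ₘ K) = 0 := by
        refine forall_congr' fun g => Iff.symm ?_
        refine (forall_integral_boundedContinuous_comp_mul_eq_zero_iff
          ((measurable_proj N t).comp measurable_snd) (hD g)).trans
          (forall₂_congr fun A hA => ?_)
        rw [preimage_comp, Measure.setIntegral_compProd_preimage_snd
          (f := fun x => g x - μ[g | filt N t] x) (hD g)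
          (measurable_proj N t hA)]
    _ ↔ _ := forall_comm

lemma integral_test_eq_integral_condExp {N t : ℕ} {μ : Measure (Path N)}
    [IsProbabilityMeasure μ] {γ : Measure (Path N × Path N)} (hγ : γ.map Prod.fst = μ)
    (h : (Fin t → ℝ) →ᵇ ℝ) (g : Path N →ᵇ ℝ) :
    ∫ p, h (proj N t p.2) *
        (g p.1 - ∫ z, g (glue N t p.1 z) ∂(tailK N μ t (proj N t p.1))) ∂γ =
      ∫ p, h (proj N t p.2) * (g p.1 - μ[g | filt N t] p.1) ∂γ := by
  have hg : ∀ᵐ x ∂(γ.map Prod.fst),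
      μ[g | filt N t] x = ∫ z, g (glue N t x z) ∂(tailK N μ t (proj N t x)) := by
    rw [hγ]
    exact condExp_filt_ae_eq_integral_tailK N t μ g.continuous.measurable.stronglyMeasurable
      (g.integrable μ)
  refine integral_congr_ae ?_
  filter_upwards [ae_of_ae_map measurable_fst.aemeasurable hg] with p hp
  rw [hp]

theorem test_function_characterization_of_causality_general
    (N : ℕ) (μ ν : Measure (Path N)) [IsProbabilityMeasure μ]
    (γ : Measure (Path N × Path N)) [IsProbabilityMeasure γ] :
    IsCausal N μ ν γ ↔
      (IsCoupling μ ν γ ∧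
        ∀ (t : ℕ), 1 ≤ t → t ≤ N →
          ∀ (h : (Fin t → ℝ) →ᵇ ℝ) (g : Path N →ᵇ ℝ),
            ∫ p, h (proj N t p.2) *
              (g p.1 - ∫ z, g (glue N t p.1 z) ∂(tailK N μ t (proj N t p.1))) ∂γ = 0) := by
  constructor
  · rintro ⟨hc, hcausal⟩
    have hγ : μ ⊗ₘ γ.condKernel = γ := by rw [← hc.1]; exact γ.disintegrate _
    refine ⟨hc, fun t ht1 htN h g => ?_⟩
    rw [integral_test_eq_integral_condExp hc.1, ← hγ]
    exact (forall_exists_filt_measurable_ae_eq_iff t (by rw [hγ]; exact hc.1)).mp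
      (hcausal _ inferInstance hγ t ht1 htN) h g
  · rintro ⟨hc, htest⟩
    refine ⟨hc, fun K _ hK t ht1 htN => ?_⟩
    subst hK
    refine (forall_exists_filt_measurable_ae_eq_iff t hc.1).mpr fun h g => ?_
    rw [← integral_test_eq_integral_condExp hc.1]
    exact htest t ht1 htN h g

theorem test_function_characterization_of_causality
    (N : ℕ) (μ ν : Measure (Path N)) [IsProbabilityMeasure μ] [IsProbabilityMeasure ν]
    (γ : Measure (Path N × Path N)) [IsProbabilityMeasure γ] :
    IsCausal N μ ν γ ↔
      (IsCoupling μ ν γ ∧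
        ∀ (t : ℕ), 1 ≤ t → t ≤ N →
          ∀ (h : (Fin t → ℝ) →ᵇ ℝ) (g : Path N →ᵇ ℝ),
            ∫ p, h (proj N t p.2) *
              (g p.1 - ∫ z, g (glue N t p.1 z) ∂(tailK N μ t (proj N t p.1))) ∂γ = 0) :=
  test_function_characterization_of_causality_general N μ ν γ

end CausalTransport
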